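/- arXiv:1906.06049 — 2 statements merged into one kernel-verified Lean document; each statement's English description precedes it below -/
import Mathlib

section
/- Let A(z), B(z) be smooth n×n matrix-valued functions on ℝ^n with B(z)·A(z) = I for all z, and let H(z) be a smooth vector field with flow z' = H(z). Along any trajectory z(t), define g(t) = B(z(t))·H(z(t)). Then g satisfies the linear ODE g' = Λ(z) g, where Λ(z) = B(z)·[A, H](z) and [A,H] is the matrix whose i-th column is DH(z)·Aᵢ(z) − DAᵢ(z)·H(z) (Aᵢ the i-th column of A). -/
/-- If `B A = I` and `g(t) = B(z(t)) H(z(t))` along a trajectory of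
`z' = H(z)`, then `g' = Λ(z) g` where `Λ = B [A, H]` and the `j`-th column of
`[A, H]` is `DH·Aⱼ − DAⱼ·H`. -/
theorem stmt5 {n : ℕ}
    (A B : (Fin n → ℝ) → Matrix (Fin n) (Fin n) ℝ)
    (hA : ∀ i j, ContDiff ℝ (⊤ : ℕ∞) fun z => A z i j)
    (hB : ∀ i j, ContDiff ℝ (⊤ : ℕ∞) fun z => B z i j)
    (hBA : ∀ z, B z * A z = 1)
    (H : (Fin n → ℝ) → (Fin n → ℝ)) (hH : ContDiff ℝ (⊤ : ℕ∞) H)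
    (z : ℝ → (Fin n → ℝ)) (hz : ∀ t, HasDerivAt z (H (z t)) t)
    (Λ : (Fin n → ℝ) → Matrix (Fin n) (Fin n) ℝ)
    (hΛ : ∀ w, Λ w = B w * Matrix.of fun i j =>
        fderiv ℝ H w (fun i' => A w i' j) i
          - fderiv ℝ (fun u i' => A u i' j) w (H w) i)
    (g : ℝ → Fin n → ℝ) (hg : ∀ t, g t = (B (z t)).mulVec (H (z t))) :
    ∀ t, HasDerivAt g ((Λ (z t)).mulVec (g t)) t := by
  intro t
  have hz' := hz t
  set w := z t with hw
  set v := H w with hv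
  -- entrywise differentiability at w
  have hHl : ∀ k, DifferentiableAt ℝ (fun u => H u k) w := by
    intro k
    exact (ContinuousLinearMap.proj (R := ℝ) (φ := fun _ : Fin n => ℝ)
      k).differentiableAt.comp w (hH.differentiable (by simp) w)
  have hAl : ∀ i j, DifferentiableAt ℝ (fun u => A u i j) w := fun i j =>
    ((hA i j).differentiable (by simp)) w
  have hBl : ∀ i j, DifferentiableAt ℝ (fun u => B u i j) w := fun i j =>
    ((hB i j).differentiable (by simp)) w
  -- component derivatives of pi-valued functions
  have hfH : ∀ u0 : Fin n → ℝ, ∀ k,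
      fderiv ℝ H w u0 k = fderiv ℝ (fun u => H u k) w u0 := by
    intro u0 k
    have h1 : fderiv ℝ H w = ContinuousLinearMap.pi fun k => fderiv ℝ (fun u => H u k) w :=
      fderiv_pi hHl
    rw [h1]; rfl
  have hfA : ∀ j, ∀ u0 : Fin n → ℝ, ∀ k,
      fderiv ℝ (fun u i' => A u i' j) w u0 k = fderiv ℝ (fun u => A u k j) w u0 := by
    intro j u0 k
    have h1 : fderiv ℝ (fun u i' => A u i' j) w =
        ContinuousLinearMap.pi fun k => fderiv ℝ (fun u => A u k j) w :=
      fderiv_pi (fun k => hAl k j)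
    rw [h1]; rfl
  -- key derivative computation
  have key : HasDerivAt g (fun i => ∑ j, (fderiv ℝ (fun u => B u i j) w v * H w j
      + B w i j * fderiv ℝ (fun u => H u j) w v)) t := by
    have hgfun : g = fun s i => ∑ j, B (z s) i j * H (z s) j := by
      funext s i
      rw [hg s]
      simp [Matrix.mulVec, dotProduct]
    rw [hgfun]
    refine hasDerivAt_pi.mpr fun i => HasDerivAt.fun_sum fun j _ => ?_
    have h1 : HasDerivAt (fun s => B (z s) i j) (fderiv ℝ (fun u => B u i j) w v) t :=
      ((hBl i j).hasFDerivAt).comp_hasDerivAt t hz'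
    have h2 : HasDerivAt (fun s => H (z s) j) (fderiv ℝ (fun u => H u j) w v) t :=
      ((hHl j).hasFDerivAt).comp_hasDerivAt t hz'
    exact h1.mul h2
  -- algebraic identities
  have hAB : ∀ u, A u * B u = 1 := fun u => mul_eq_one_comm.mpr (hBA u)
  have hAg : (A w).mulVec (g t) = H w := by
    rw [hg t, ← hw, Matrix.mulVec_mulVec, hAB, Matrix.one_mulVec]
  have hAgk : ∀ k, ∑ j, A w k j * g t j = H w k := by
    intro k
    have h := congrFun hAg k
    simpa [Matrix.mulVec, dotProduct] using h
  -- differentiating B A = 1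
  have hid : ∀ i k, ∑ j, (A w j k * fderiv ℝ (fun u => B u i j) w v
      + B w i j * fderiv ℝ (fun u => A u j k) w v) = 0 := by
    intro i k
    have hF : HasFDerivAt (fun u => ∑ j, B u i j * A u j k)
        (∑ j, (B w i j • fderiv ℝ (fun u => A u j k) w
          + A w j k • fderiv ℝ (fun u => B u i j) w)) w :=
      HasFDerivAt.fun_sum fun j _ => ((hBl i j).hasFDerivAt).mul ((hAl j k).hasFDerivAt)
    have h0 : HasFDerivAt (fun u : Fin n → ℝ => ∑ j, B u i j * A u j k)
        (0 : (Fin n → ℝ) →L[ℝ] ℝ) w := by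
      have hconst : (fun u : Fin n → ℝ => ∑ j, B u i j * A u j k)
          = fun _ => (1 : Matrix (Fin n) (Fin n) ℝ) i k := by
        funext u
        rw [← Matrix.mul_apply, hBA u]
      rw [hconst]
      exact hasFDerivAt_const _ _
    have heq := hF.unique h0
    have happ := congrArg (fun L : (Fin n → ℝ) →L[ℝ] ℝ => L v) heq
    simpa [ContinuousLinearMap.sum_apply, mul_comm, add_comm] using happ
  -- now show the stated derivative equals the computed one
  convert key using 1
  funext i
  have himp : ∀ j, ∑ k, B w i k * fderiv ℝ (fun u => A u k j) w v
      = - ∑ k, A w k j * fderiv ℝ (fun u => B u i k) w v := by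
    intro j
    have h := hid i j
    rw [Finset.sum_add_distrib] at h
    linarith
  have hMap : ∀ k, ∑ j, ((fderiv ℝ H w (fun i' => A w i' j) k
      - fderiv ℝ (fun u i' => A u i' j) w v k) * g t j)
      = fderiv ℝ (fun u => H u k) w v
        - ∑ j, fderiv ℝ (fun u => A u k j) w v * g t j := by
    intro k
    have hsum1 : ∑ j, fderiv ℝ (fun u => H u k) w (fun i' => A w i' j) * g t j
        = fderiv ℝ (fun u => H u k) w v := by
      have hrepr : (A w).mulVec (g t) = ∑ j, g t j • (fun i' => A w i' j) := by
        funext i'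
        simp [Matrix.mulVec, dotProduct, Finset.sum_apply, mul_comm]
      have h2 : ∑ j, fderiv ℝ (fun u => H u k) w (fun i' => A w i' j) * g t j
          = fderiv ℝ (fun u => H u k) w ((A w).mulVec (g t)) := by
        rw [hrepr, map_sum]
        refine Finset.sum_congr rfl fun j _ => ?_
        rw [map_smul]
        simp [mul_comm]
      rw [h2, hAg, ← hv]
    rw [Finset.sum_congr rfl fun j _ => by rw [sub_mul, hfH, hfA],
      Finset.sum_sub_distrib, hsum1]
  calc (Λ w).mulVec (g t) i
      = ∑ k, B w i k * ∑ j, ((fderiv ℝ H w (fun i' => A w i' j) k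
          - fderiv ℝ (fun u i' => A u i' j) w v k) * g t j) := by
        rw [hΛ, ← Matrix.mulVec_mulVec]
        simp [Matrix.mulVec, dotProduct, ← hv]
    _ = ∑ k, B w i k * fderiv ℝ (fun u => H u k) w v
        - ∑ j, (∑ k, B w i k * fderiv ℝ (fun u => A u k j) w v) * g t j := by
        simp only [hMap, mul_sub, Finset.sum_sub_distrib, Finset.mul_sum]
        congr 1
        rw [Finset.sum_comm]
        refine Finset.sum_congr rfl fun j _ => ?_
        rw [Finset.sum_mul]
        refine Finset.sum_congr rfl fun k _ => by ring
    _ = ∑ k, B w i k * fderiv ℝ (fun u => H u k) w v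
        + ∑ j, (∑ k, A w k j * fderiv ℝ (fun u => B u i k) w v) * g t j := by
        rw [sub_eq_add_neg]
        congr 1
        rw [← Finset.sum_neg_distrib]
        refine Finset.sum_congr rfl fun j _ => ?_
        rw [himp j]
        ring
    _ = ∑ k, B w i k * fderiv ℝ (fun u => H u k) w v
        + ∑ k, fderiv ℝ (fun u => B u i k) w v * H w k := by
        congr 1
        simp only [Finset.sum_mul]
        rw [Finset.sum_comm]
        refine Finset.sum_congr rfl fun k _ => ?_
        rw [← hAgk k, Finset.mul_sum]
        refine Finset.sum_congr rfl fun j _ => by ring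
    _ = ∑ j, (fderiv ℝ (fun u => B u i j) w v * H w j
        + B w i j * fderiv ℝ (fun u => H u j) w v) := by
        rw [Finset.sum_add_distrib, add_comm]
end

section
/- Let H(z, ε) = N(z)f(z) + εG(z) be a smooth vector field where f(z*) = 0, the Jacobian in the 'fast' coordinates D_y f(x*, y*) is invertible (under a splitting z = (x,y) with y ∈ ℝ^{n−k}), N has full column rank and Df·N is invertible near z*. If along the graph y = h₀(x) + ε h₁(x) + O(ε²) the fast-component equation (Df N)⁻¹ Df · H = 0 holds to order ε, with f(x, h₀(x)) = 0, then h₁(x) = −(D_y f)⁻¹ (Df N)⁻¹ (Df G) evaluated at (x, h₀(x)). -/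
open Asymptotics Filter

private lemma aux_const_zero {c : ℝ}
    (H : (fun ε : ℝ => ε * c) =o[nhds 0] fun ε => ε) : c = 0 := by
  by_contra hc
  have hc2 : (0:ℝ) < |c| / 2 := by positivity
  have h1 : ∀ᶠ ε : ℝ in nhds 0, ‖ε * c‖ ≤ |c|/2 * ‖ε‖ := isLittleO_iff.mp H hc2
  have h2 : ∀ᶠ ε : ℝ in nhdsWithin 0 {(0:ℝ)}ᶜ, ‖ε * c‖ ≤ |c|/2 * ‖ε‖ :=
    h1.filter_mono nhdsWithin_le_nhds
  have h3 : ∀ᶠ ε : ℝ in nhdsWithin 0 {(0:ℝ)}ᶜ, ε ∈ ({(0:ℝ)}ᶜ : Set ℝ) :=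
    eventually_mem_nhdsWithin
  obtain ⟨ε, hε1, hε2⟩ := (h2.and h3).exists
  have hεne : ε ≠ 0 := hε2
  rw [norm_mul] at hε1
  have hεpos : 0 < ‖ε‖ := norm_pos_iff.mpr hεne
  have h4 : ‖c‖ ≤ |c|/2 := by
    have := (mul_le_mul_iff_of_pos_right hεpos).mp (by linarith [hε1] : ‖c‖ * ‖ε‖ ≤ (|c|/2) * ‖ε‖)
    exact this
  have h5 : |c| ≤ |c|/2 := by simpa [Real.norm_eq_abs] using h4
  have : 0 < |c| := abs_pos.mpr hc
  linarith

private lemma aux_matvec_isLittleO {ι κ : Type*} [Fintype ι] [Fintype κ]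
    {A : ℝ → Matrix ι κ ℝ} {v : ℝ → κ → ℝ}
    (hA : ∀ i j, ContinuousAt (fun ε => A ε i j) 0)
    (hv : v =o[nhds 0] fun ε : ℝ => ε) :
    (fun ε => (A ε).mulVec (v ε)) =o[nhds 0] fun ε : ℝ => ε := by
  rw [isLittleO_pi]
  intro i
  have hrw : (fun ε => (A ε).mulVec (v ε) i) = fun ε => ∑ j, A ε i j * v ε j := by
    funext ε; simp [Matrix.mulVec, dotProduct]
  rw [hrw]
  refine Asymptotics.IsLittleO.fun_sum fun j _ => ?_
  have hb : (fun ε => A ε i j) =O[nhds 0] (fun _ : ℝ => (1:ℝ)) :=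
    Filter.Tendsto.isBigO_one ℝ (hA i j)
  simpa using hb.mul_isLittleO (isLittleO_pi.mp hv j)

private lemma aux_smul_isLittleO {E : Type*} [NormedAddCommGroup E] [NormedSpace ℝ E]
    {c : ℝ → E} (hc : Tendsto c (nhds 0) (nhds 0)) :
    (fun ε : ℝ => ε • c ε) =o[nhds 0] fun ε : ℝ => ε := by
  have h1 : c =o[nhds (0:ℝ)] (fun _ : ℝ => (1:ℝ)) := (isLittleO_one_iff ℝ).mpr hc
  simpa using (isBigO_refl (fun ε : ℝ => ε) (nhds 0)).smul_isLittleO h1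


/-- First-order slow-manifold correction. With `z = (x, y)` encoded on the
index type `Fin p ⊕ Fin q`, vector field `H(z, ε) = N(z) f(z) + ε G(ε, z)`, `f(x,y₀) = 0`,
`D_y f` and `Df·N` invertible at `z₀ = (x, y₀)`: if along a graph
`y = h(ε) = y₀ + ε y₁ + o(ε)` the fast-component equation `(Df N)⁻¹ Df · H = 0` holds to
order `ε`, then `y₁ = −(D_y f)⁻¹ (Df N)⁻¹ (Df G)` evaluated at `(x, y₀)`, `ε = 0`. -/
theorem stmt16 {p q : ℕ}
    (f : ((Fin p ⊕ Fin q) → ℝ) → (Fin q → ℝ)) (hf : ContDiff ℝ (⊤ : ℕ∞) f)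
    (N : ((Fin p ⊕ Fin q) → ℝ) → Matrix (Fin p ⊕ Fin q) (Fin q) ℝ)
    (hNcont : Continuous N)
    (G : ℝ → ((Fin p ⊕ Fin q) → ℝ) → ((Fin p ⊕ Fin q) → ℝ))
    (hGcont : Continuous fun w : ℝ × ((Fin p ⊕ Fin q) → ℝ) => G w.1 w.2)
    (Df : ((Fin p ⊕ Fin q) → ℝ) → Matrix (Fin q) (Fin p ⊕ Fin q) ℝ)
    (hDf : ∀ w, Df w = Matrix.of fun i j => fderiv ℝ f w (Pi.single j 1) i)
    (Dyf : ((Fin p ⊕ Fin q) → ℝ) → Matrix (Fin q) (Fin q) ℝ)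
    (hDyf : ∀ w, Dyf w = Matrix.of fun i j => Df w i (Sum.inr j))
    (x : Fin p → ℝ) (y0 y1 : Fin q → ℝ)
    (hcrit : f (Sum.elim x y0) = 0)
    (hDyf_inv : IsUnit (Dyf (Sum.elim x y0)))
    (hDfN_inv : IsUnit (Df (Sum.elim x y0) * N (Sum.elim x y0)))
    (h : ℝ → Fin q → ℝ) (hh0 : h 0 = y0) (hh1 : HasDerivAt h y1 0)
    (hfast : (fun ε : ℝ =>
        ((Df (Sum.elim x (h ε)) * N (Sum.elim x (h ε)))⁻¹).mulVec
          ((Df (Sum.elim x (h ε))).mulVec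
            ((N (Sum.elim x (h ε))).mulVec (f (Sum.elim x (h ε)))
              + ε • G ε (Sum.elim x (h ε)))))
        =o[nhds (0 : ℝ)] fun ε => ε) :
    y1 = -(((Dyf (Sum.elim x y0))⁻¹
        * (Df (Sum.elim x y0) * N (Sum.elim x y0))⁻¹).mulVec
          ((Df (Sum.elim x y0)).mulVec (G 0 (Sum.elim x y0)))) := by
  set z0 : (Fin p ⊕ Fin q) → ℝ := Sum.elim x y0 with hz0
  set φ : ℝ → (Fin p ⊕ Fin q) → ℝ := fun ε => Sum.elim x (h ε) with hφ
  have hφ0 : φ 0 = z0 := by show Sum.elim x (h 0) = z0; rw [hh0]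
  -- continuity facts
  have hφcont : ContinuousAt φ 0 := by
    have helim : Continuous (fun y : Fin q → ℝ => Sum.elim x y) := by
      apply continuous_pi
      rintro (a | b)
      · simpa using (continuous_const : Continuous fun _ : Fin q → ℝ => x a)
      · simpa using continuous_apply b
    exact helim.continuousAt.comp hh1.continuousAt
  have hDfcont : Continuous Df := by
    have hfd : Continuous (fun w => fderiv ℝ f w) := hf.continuous_fderiv (by simp)
    have : Continuous fun w => (Matrix.of fun i j => fderiv ℝ f w (Pi.single j 1) i :
        Matrix (Fin q) (Fin p ⊕ Fin q) ℝ) := by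
      apply continuous_pi; intro i; apply continuous_pi; intro j
      exact (continuous_apply i).comp (hfd.clm_apply continuous_const)
    exact (funext hDf : Df = _) ▸ this
  have hAcont : Continuous fun w => Df w * N w := hDfcont.matrix_mul hNcont
  have hfcont : Continuous f := hf.continuous
  -- determinant nonzero at z0, hence eventually along φ
  have hdet0 : IsUnit (Df z0 * N z0).det := (Matrix.isUnit_iff_isUnit_det _).mp hDfN_inv
  have hdet0' : (Df z0 * N z0).det ≠ 0 := by
    simpa [isUnit_iff_ne_zero] using hdet0
  have hAdet : ∀ᶠ ε : ℝ in nhds 0, IsUnit (Df (φ ε) * N (φ ε)).det := by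
    have hc : ContinuousAt (fun ε => (Df (φ ε) * N (φ ε)).det) 0 :=
      ((Continuous.matrix_det hAcont).continuousAt.comp hφcont)
    have := hc.eventually_ne (y := (0:ℝ)) (by simpa [hφ0] using hdet0')
    filter_upwards [this] with ε hε using isUnit_iff_ne_zero.mpr hε
  -- u and its littleO property
  set u : ℝ → Fin q → ℝ := fun ε =>
    (Df (φ ε)).mulVec ((N (φ ε)).mulVec (f (φ ε)) + ε • G ε (φ ε)) with hu_def
  have hu_eq : ∀ᶠ ε in nhds (0:ℝ),
      (Df (φ ε) * N (φ ε)).mulVec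
        (((Df (φ ε) * N (φ ε))⁻¹).mulVec (u ε)) = u ε := by
    filter_upwards [hAdet] with ε hε
    rw [Matrix.mulVec_mulVec, Matrix.mul_nonsing_inv _ hε, Matrix.one_mulVec]
  have hAij : ∀ i j, ContinuousAt (fun ε => (Df (φ ε) * N (φ ε)) i j) 0 := by
    intro i j
    exact ((continuous_apply j).comp ((continuous_apply i).comp hAcont)).continuousAt.comp hφcont
  have hu : u =o[nhds (0:ℝ)] fun ε => ε := by
    have := aux_matvec_isLittleO hAij hfast
    exact this.congr' hu_eq EventuallyEq.rfl
  -- derivative of f along the graph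
  have hfd : HasFDerivAt f (fderiv ℝ f z0) z0 :=
    ((hf.differentiable (by simp)) z0).hasFDerivAt
  have hφd : HasDerivAt φ (Sum.elim 0 y1) 0 := by
    rw [hasDerivAt_pi]
    rintro (a | b)
    · simpa [hφ] using hasDerivAt_const (0:ℝ) (x a)
    · simpa [hφ] using (hasDerivAt_pi.mp hh1) b
  have hgd : HasDerivAt (fun ε => f (φ ε)) ((fderiv ℝ f z0) (Sum.elim 0 y1)) 0 := by
    have hfd' : HasFDerivAt f (fderiv ℝ f z0) (φ 0) := by rw [hφ0]; exact hfd
    exact hfd'.comp_hasDerivAt 0 hφd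
  -- identify the derivative with Dyf z0 *ᵥ y1
  have hv : (fderiv ℝ f z0) (Sum.elim 0 y1) = (Dyf z0).mulVec y1 := by
    have hdec : (Sum.elim (0 : Fin p → ℝ) y1 : (Fin p ⊕ Fin q) → ℝ)
        = ∑ j : Fin q, y1 j • (Pi.single (Sum.inr j) (1:ℝ) : (Fin p ⊕ Fin q) → ℝ) := by
      funext k
      rw [Finset.sum_apply]
      rcases k with a | b
      · simp [Pi.single_apply]
      · simp [Pi.single_apply]
    rw [hdec, map_sum]
    funext i
    rw [Finset.sum_apply]
    simp only [map_smul, Pi.smul_apply, smul_eq_mul]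
    simp [hDyf, hDf, Matrix.mulVec, dotProduct, mul_comm]
  set vv : Fin q → ℝ := (Dyf z0).mulVec y1 with hvv
  have hg_lin : (fun ε : ℝ => f (φ ε) - ε • vv) =o[nhds 0] fun ε => ε := by
    have h1 := hasDerivAt_iff_isLittleO.mp hgd
    simpa [hφ0, hcrit, hv] using h1
  -- the target constant vector
  set w : Fin q → ℝ :=
    (Df z0 * N z0).mulVec vv + (Df z0).mulVec (G 0 z0) with hw
  -- u ε - ε • w = o(ε)
  have hsplit : ∀ ε : ℝ, u ε =
      (Df (φ ε) * N (φ ε)).mulVec (f (φ ε)) + ε • (Df (φ ε)).mulVec (G ε (φ ε)) := by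
    intro ε
    show (Df (φ ε)).mulVec ((N (φ ε)).mulVec (f (φ ε)) + ε • G ε (φ ε)) = _
    rw [Matrix.mulVec_add, Matrix.mulVec_smul, Matrix.mulVec_mulVec]
  have hT1 : (fun ε : ℝ => (Df (φ ε) * N (φ ε)).mulVec (f (φ ε) - ε • vv))
      =o[nhds 0] fun ε => ε := aux_matvec_isLittleO hAij hg_lin
  have hT2 : (fun ε : ℝ => ε • ((Df (φ ε) * N (φ ε)).mulVec vv - (Df z0 * N z0).mulVec vv))
      =o[nhds 0] fun ε => ε := by
    apply aux_smul_isLittleO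
    have hc : ContinuousAt (fun ε => (Df (φ ε) * N (φ ε)).mulVec vv) 0 := by
      exact ((hAcont.matrix_mulVec continuous_const).continuousAt.comp hφcont)
    have h1 := hc.tendsto
    rw [hφ0] at h1
    have h2 : Tendsto (fun ε : ℝ => (Df (φ ε) * N (φ ε)).mulVec vv - (Df z0 * N z0).mulVec vv)
        (nhds 0) (nhds ((Df z0 * N z0).mulVec vv - (Df z0 * N z0).mulVec vv)) :=
      h1.sub tendsto_const_nhds
    simpa [sub_self] using h2
  have hT3 : (fun ε : ℝ => ε • ((Df (φ ε)).mulVec (G ε (φ ε)) - (Df z0).mulVec (G 0 z0)))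
      =o[nhds 0] fun ε => ε := by
    apply aux_smul_isLittleO
    have hc : ContinuousAt (fun ε : ℝ => (Df (φ ε)).mulVec (G ε (φ ε))) 0 := by
      have hG : ContinuousAt (fun ε : ℝ => G ε (φ ε)) 0 :=
        hGcont.continuousAt.comp (continuousAt_id.prodMk hφcont)
      have hDfφ : ContinuousAt (fun ε : ℝ => Df (φ ε)) 0 :=
        hDfcont.continuousAt.comp hφcont
      have hmv : Continuous fun pr : (Matrix (Fin q) (Fin p ⊕ Fin q) ℝ) × ((Fin p ⊕ Fin q) → ℝ) =>
          pr.1.mulVec pr.2 :=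
        (continuous_fst.matrix_mulVec continuous_snd)
      exact hmv.continuousAt.comp (hDfφ.prodMk hG)
    have h1 := hc.tendsto
    rw [hφ0] at h1
    have h2 : Tendsto (fun ε : ℝ => (Df (φ ε)).mulVec (G ε (φ ε)) - (Df z0).mulVec (G 0 z0))
        (nhds 0) (nhds ((Df z0).mulVec (G 0 z0) - (Df z0).mulVec (G 0 z0))) :=
      h1.sub tendsto_const_nhds
    simpa [sub_self] using h2
  have hkey : (fun ε : ℝ => u ε - ε • w) =o[nhds 0] fun ε => ε := by
    have hrw : ∀ ε : ℝ, u ε - ε • w =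
        (Df (φ ε) * N (φ ε)).mulVec (f (φ ε) - ε • vv) +
          (ε • ((Df (φ ε) * N (φ ε)).mulVec vv - (Df z0 * N z0).mulVec vv) +
           ε • ((Df (φ ε)).mulVec (G ε (φ ε)) - (Df z0).mulVec (G 0 z0))) := by
      intro ε
      rw [hsplit ε, Matrix.mulVec_sub, Matrix.mulVec_smul, hw]
      module
    exact ((hT1.add (hT2.add hT3)).congr (fun ε => (hrw ε).symm) (fun _ => rfl))
  -- conclude w = 0
  have hw0 : w = 0 := by
    have hsw : (fun ε : ℝ => ε • w) =o[nhds 0] fun ε => ε := by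
      have := hu.sub hkey
      exact this.congr (fun ε => by abel) (fun _ => rfl)
    funext i
    have hi : (fun ε : ℝ => ε * w i) =o[nhds 0] fun ε => ε := by
      simpa using isLittleO_pi.mp hsw i
    simpa using aux_const_zero hi
  -- final matrix algebra
  have hDydet : IsUnit (Dyf z0).det := (Matrix.isUnit_iff_isUnit_det _).mp hDyf_inv
  have heq1 : (Df z0 * N z0).mulVec vv = -((Df z0).mulVec (G 0 z0)) := by
    have := hw0
    rw [hw] at this
    linear_combination (norm := module) this
  have heq2 : vv = ((Df z0 * N z0)⁻¹).mulVec (-((Df z0).mulVec (G 0 z0))) := by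
    rw [← heq1, Matrix.mulVec_mulVec, Matrix.nonsing_inv_mul _ hdet0, Matrix.one_mulVec]
  have heq3 : y1 = ((Dyf z0)⁻¹).mulVec vv := by
    rw [hvv, Matrix.mulVec_mulVec, Matrix.nonsing_inv_mul _ hDydet, Matrix.one_mulVec]
  rw [heq3, heq2, Matrix.mulVec_mulVec, Matrix.mulVec_neg]
end
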